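/- A Cu-semigroup S satisfies (O5) if and only if every basis B ⊆ S has the following property: for all x', x, y', y, z', z ∈ B satisfying x + y ≪ z', x' ≪ x, y' ≪ y, z' ≪ z, there exists c ∈ B such that x' + c ≪ z, z' ≪ x + c, and y' ≪ c. -/
import Mathlib


def WayBelow {S : Type*} [PartialOrder S] (x y : S) : Prop :=
  ∀ f : ℕ → S, Monotone f → ∀ z : S, IsLUB (Set.range f) z → y ≤ z → ∃ n, x ≤ f n

class CuSemigroup (S : Type*) [AddCommMonoid S] [PartialOrder S] : Prop where
  zero_le : ∀ x : S, 0 ≤ x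
  add_le_add_left : ∀ x y : S, x ≤ y → ∀ z : S, z + x ≤ z + y
  exists_sup : ∀ f : ℕ → S, Monotone f → ∃ z : S, IsLUB (Set.range f) z
  exists_wb_seq : ∀ x : S, ∃ f : ℕ → S, (∀ n, WayBelow (f n) (f (n + 1))) ∧ IsLUB (Set.range f) x
  wb_add : ∀ x' x y' y : S, WayBelow x' x → WayBelow y' y → WayBelow (x' + y') (x + y)
  sup_add : ∀ f g : ℕ → S, Monotone f → Monotone g → ∀ a b : S,
    IsLUB (Set.range f) a → IsLUB (Set.range g) b →
    IsLUB (Set.range fun n => f n + g n) (a + b)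

def IsBasis {S : Type*} [PartialOrder S] (B : Set S) : Prop :=
  ∀ x' x : S, WayBelow x' x → ∃ b ∈ B, WayBelow x' b ∧ WayBelow b x

def O5 (S : Type*) [AddCommMonoid S] [PartialOrder S] : Prop :=
  ∀ x' x y' y z : S, x + y ≤ z → WayBelow x' x → WayBelow y' y →
    ∃ c : S, x' + c ≤ z ∧ z ≤ x + c ∧ WayBelow y' c

set_option linter.unusedSectionVars false
section Helpers

variable {S : Type*} [AddCommMonoid S] [PartialOrder S]

lemma isLUB_const' (x : S) : IsLUB (Set.range fun _ : ℕ => x) x := by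
  constructor
  · rintro _ ⟨n, rfl⟩; exact le_rfl
  · intro b hb; exact hb ⟨0, rfl⟩

lemma WayBelow.le {x y : S} (h : WayBelow x y) : x ≤ y := by
  obtain ⟨n, hn⟩ := h (fun _ => y) monotone_const y (isLUB_const' y) le_rfl
  exact hn

lemma le_wayBelow {a b c : S} (hab : a ≤ b) (h : WayBelow b c) : WayBelow a c :=
  fun f hf w hw hcw => (h f hf w hw hcw).imp fun _ hn => hab.trans hn

lemma wayBelow_le {a b c : S} (h : WayBelow a b) (hbc : b ≤ c) : WayBelow a c :=
  fun f hf w hw hcw => h f hf w hw (hbc.trans hcw)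

variable [CuSemigroup S]

lemma add_le_left {a b : S} (c : S) (h : a ≤ b) : c + a ≤ c + b :=
  CuSemigroup.add_le_add_left a b h c

lemma add_le_right' {a b : S} (h : a ≤ b) (c : S) : a + c ≤ b + c := by
  rw [add_comm a, add_comm b]; exact add_le_left c h

lemma add_le_add'' {a b c d : S} (h1 : a ≤ b) (h2 : c ≤ d) : a + c ≤ b + d :=
  (add_le_right' h1 c).trans (add_le_left b h2)

lemma mono_of_wb {f : ℕ → S} (h : ∀ n, WayBelow (f n) (f (n + 1))) : Monotone f :=
  monotone_nat_of_le_succ fun n => (h n).le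

lemma interpolate {x' x : S} (h : WayBelow x' x) :
    ∃ w, WayBelow x' w ∧ WayBelow w x ∧ w ≤ x := by
  obtain ⟨f, hf, hlub⟩ := CuSemigroup.exists_wb_seq x
  obtain ⟨n, hn⟩ := h f (mono_of_wb hf) x hlub le_rfl
  exact ⟨f (n + 1), le_wayBelow hn (hf n),
    wayBelow_le (hf (n + 1)) (hlub.1 ⟨n + 2, rfl⟩), hlub.1 ⟨n + 1, rfl⟩⟩

lemma lub_add_const (x : S) {g : ℕ → S} (hg : Monotone g) {c : S}
    (hc : IsLUB (Set.range g) c) : IsLUB (Set.range fun n => x + g n) (x + c) :=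
  CuSemigroup.sup_add (fun _ => x) g monotone_const hg x c (isLUB_const' x) hc

lemma exists_dec_chain {x' x : S} (h : WayBelow x' x) :
    ∃ X : ℕ → S, (∀ n, WayBelow x' (X n)) ∧ (∀ n, WayBelow (X (n + 1)) (X n)) ∧ ∀ n, X n ≤ x := by
  obtain ⟨w0, h0, -, h0le⟩ := interpolate h
  have step : ∀ w : {w : S // WayBelow x' w ∧ w ≤ x},
      ∃ w' : {w' : S // WayBelow x' w' ∧ w' ≤ x}, WayBelow w'.1 w.1 := by
    rintro ⟨w, hw, hwx⟩
    obtain ⟨w', h1, h2, h3⟩ := interpolate hw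
    exact ⟨⟨w', h1, h3.trans hwx⟩, h2⟩
  let F : ℕ → {w : S // WayBelow x' w ∧ w ≤ x} :=
    fun n => Nat.rec ⟨w0, h0, h0le⟩ (fun _ p => (step p).choose) n
  exact ⟨fun n => (F n).1, fun n => (F n).2.1,
    fun n => (step (F n)).choose_spec, fun n => (F n).2.2⟩

end Helpers

lemma existsRecChain {α : ℕ → Type*} (r : ∀ n, α n → α (n + 1) → Prop)
    (base : α 0) (step : ∀ n a, ∃ b, r n a b) :
    ∃ F : ∀ n, α n, F 0 = base ∧ ∀ n, r n (F n) (F (n + 1)) := by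
  let F : ∀ n, α n := fun n => Nat.rec base (fun n a => (step n a).choose) n
  exact ⟨F, rfl, fun n => (step n (F n)).choose_spec⟩

theorem o5_iff_basis_property {S : Type*} [AddCommMonoid S] [PartialOrder S] [CuSemigroup S] :
    O5 S ↔ ∀ B : Set S, IsBasis B →
      ∀ x' x y' y z' z : S, x' ∈ B → x ∈ B → y' ∈ B → y ∈ B → z' ∈ B → z ∈ B →
        WayBelow (x + y) z' → WayBelow x' x → WayBelow y' y → WayBelow z' z →
        ∃ c ∈ B, WayBelow (x' + c) z ∧ WayBelow z' (x + c) ∧ WayBelow y' c := by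
  constructor
  · -- forward
    intro hO5 B hB x' x y' y z' z _ _ _ _ _ _ hxy hx hy hz
    obtain ⟨z'', hz1, hz2, hz2le⟩ := interpolate hz
    have hxyz : x + y ≤ z'' := hxy.le.trans hz1.le
    obtain ⟨c₀, h1, h2, h3⟩ := hO5 x' x y' y z'' hxyz hx hy
    obtain ⟨f, hf, hflub⟩ := CuSemigroup.exists_wb_seq x
    obtain ⟨g, hg, hglub⟩ := CuSemigroup.exists_wb_seq c₀
    have hfm := mono_of_wb hf
    have hgm := mono_of_wb hg
    have hsum : IsLUB (Set.range fun n => f n + g n) (x + c₀) :=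
      CuSemigroup.sup_add f g hfm hgm x c₀ hflub hglub
    have hsm : Monotone fun n => f n + g n := fun a b hab => add_le_add'' (hfm hab) (hgm hab)
    obtain ⟨n, hn⟩ := hz1 _ hsm (x + c₀) hsum h2
    obtain ⟨m, hm⟩ := h3 g hgm c₀ hglub le_rfl
    set N := max n m with hN
    obtain ⟨b, hbB, hb1, hb2⟩ := hB (g (N + 1)) (g (N + 2)) (hg (N + 1))
    refine ⟨b, hbB, ?_, ?_, ?_⟩
    · -- x' + b ≪ z
      have hbc : b ≤ c₀ := hb2.le.trans (hglub.1 ⟨N + 2, rfl⟩)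
      exact le_wayBelow ((add_le_left x' hbc).trans h1) hz2
    · -- z' ≪ x + b
      have h4 : z' ≤ f N + g N :=
        hn.trans (add_le_add'' (hfm (le_max_left n m)) (hgm (le_max_left n m)))
      have h5 : WayBelow (f N + g N) (f (N + 1) + g (N + 1)) :=
        CuSemigroup.wb_add _ _ _ _ (hf N) (hg N)
      exact le_wayBelow h4 (wayBelow_le h5 (add_le_add'' (hflub.1 ⟨N + 1, rfl⟩) hb1.le))
    · -- y' ≪ b
      have h6 : y' ≤ g N := hm.trans (hgm (le_max_right n m))
      exact le_wayBelow h6 (wayBelow_le (hg N) hb1.le)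
  · -- reverse
    intro H x' x y' y z hxyz hx hy
    have hB : IsBasis (Set.univ : Set S) := by
      intro a' a ha
      obtain ⟨w, h1, h2, -⟩ := interpolate ha
      exact ⟨w, trivial, h1, h2⟩
    have P : ∀ a' a b' b c' c : S, WayBelow a' a → WayBelow b' b → WayBelow c' c →
        WayBelow (a + b) c' →
        ∃ d, WayBelow (a' + d) c ∧ WayBelow c' (a + d) ∧ WayBelow b' d := by
      intro a' a b' b c' c h2 h3 h4 h1
      obtain ⟨d, -, hd⟩ := H Set.univ hB a' a b' b c' c trivial trivial trivial trivial
        trivial trivial h1 h2 h3 h4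
      exact ⟨d, hd⟩
    obtain ⟨X, hXwb, hXstep, hXle⟩ := exists_dec_chain hx
    obtain ⟨Z, hZstep, hZlub⟩ := CuSemigroup.exists_wb_seq z
    have hZmono := mono_of_wb hZstep
    have hXlt : ∀ n, x' ≤ X n := fun n => (hXwb n).le
    have hZz : ∀ k, WayBelow (Z k) z := fun k => wayBelow_le (hZstep k) (hZlub.1 ⟨k + 1, rfl⟩)
    set Inv : ℕ → S × S → Prop := fun n p =>
      WayBelow y' p.1 ∧ WayBelow p.1 p.2 ∧ WayBelow (X (n + 2) + p.2) z ∧ Z n ≤ x + p.1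
      with hInv
    -- base
    obtain ⟨y1, hy1, hy1y, -⟩ := interpolate hy
    obtain ⟨y2, hy12, hy2y, -⟩ := interpolate hy1y
    have hsum0 : WayBelow (X 1 + y2) z :=
      wayBelow_le (CuSemigroup.wb_add _ _ _ _ (hXstep 0) hy2y)
        ((add_le_right' (hXle 0) y).trans hxyz)
    obtain ⟨k0, hk0⟩ := hsum0 Z hZmono z hZlub le_rfl
    obtain ⟨C0, hC1, hC2, hC3⟩ := P (X 2) (X 1) y1 y2 (Z (k0 + 1)) z
      (hXstep 1) hy12 (hZz (k0 + 1)) (le_wayBelow hk0 (hZstep k0))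
    obtain ⟨h0, hh0step, hh0lub⟩ := CuSemigroup.exists_wb_seq C0
    have hh0m := mono_of_wb hh0step
    obtain ⟨j1, hj1⟩ := hC2 _ (fun a b hab => add_le_left _ (hh0m hab)) (X 1 + C0)
      (lub_add_const (X 1) hh0m hh0lub) le_rfl
    obtain ⟨j2, hj2⟩ := hC3 h0 hh0m C0 hh0lub le_rfl
    have base0 : Inv 0 (h0 (max j1 j2), C0) := by
      refine ⟨wayBelow_le hy1 (hj2.trans (hh0m (le_max_right j1 j2))),
        wayBelow_le (hh0step (max j1 j2)) (hh0lub.1 ⟨max j1 j2 + 1, rfl⟩), hC1, ?_⟩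
      calc Z 0 ≤ Z (k0 + 1) := hZmono (Nat.zero_le _)
        _ ≤ X 1 + h0 j1 := hj1
        _ ≤ x + h0 (max j1 j2) := add_le_add'' (hXle 1) (hh0m (le_max_left j1 j2))
    -- step
    have key : ∀ n (p : {p : S × S // Inv n p}),
        ∃ q : {q : S × S // Inv (n + 1) q}, p.1.1 ≤ q.1.1 := by
      rintro n ⟨⟨g, C⟩, hI1, hI2, hI3, hI4⟩
      obtain ⟨k, hk⟩ := hI3 Z hZmono z hZlub le_rfl
      set K := max k (n + 1) with hK
      have hsum : WayBelow (X (n + 2) + C) (Z (K + 1)) :=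
        le_wayBelow (hk.trans (hZmono (le_max_left k (n + 1)))) (hZstep K)
      obtain ⟨C', hC1', hC2', hC3'⟩ := P (X (n + 3)) (X (n + 2)) g C (Z (K + 1)) z
        (hXstep (n + 2)) hI2 (hZz (K + 1)) hsum
      obtain ⟨h, hhstep, hhlub⟩ := CuSemigroup.exists_wb_seq C'
      have hhm := mono_of_wb hhstep
      obtain ⟨j1, hj1⟩ := hC2' _ (fun a b hab => add_le_left _ (hhm hab)) (X (n + 2) + C')
        (lub_add_const (X (n + 2)) hhm hhlub) le_rfl
      obtain ⟨j2, hj2⟩ := hC3' h hhm C' hhlub le_rfl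
      refine ⟨⟨(h (max j1 j2), C'), ?_, ?_, hC1', ?_⟩,
        hj2.trans (hhm (le_max_right j1 j2))⟩
      · exact wayBelow_le hI1 (hj2.trans (hhm (le_max_right j1 j2)))
      · exact wayBelow_le (hhstep (max j1 j2)) (hhlub.1 ⟨max j1 j2 + 1, rfl⟩)
      · calc Z (n + 1) ≤ Z (K + 1) := hZmono (Nat.le_succ_of_le (le_max_right k (n + 1)))
          _ ≤ X (n + 2) + h j1 := hj1
          _ ≤ x + h (max j1 j2) := add_le_add'' (hXle (n + 2)) (hhm (le_max_left j1 j2))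
    obtain ⟨F, hF0, hFstep⟩ := existsRecChain (α := fun n => {p : S × S // Inv n p})
      (fun n p q => p.1.1 ≤ q.1.1) ⟨_, base0⟩ key
    set g : ℕ → S := fun n => (F n).1.1 with hg
    have gmono : Monotone g := monotone_nat_of_le_succ hFstep
    obtain ⟨c, hc⟩ := CuSemigroup.exists_sup g gmono
    refine ⟨c, ?_, ?_, ?_⟩
    · -- x' + c ≤ z
      refine (lub_add_const x' gmono hc).2 ?_
      rintro _ ⟨n, rfl⟩
      exact (add_le_add'' (hXlt (n + 2)) (F n).2.2.1.le).trans (F n).2.2.2.1.le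
    · -- z ≤ x + c
      refine hZlub.2 ?_
      rintro _ ⟨n, rfl⟩
      exact (F n).2.2.2.2.trans (add_le_left x (hc.1 ⟨n, rfl⟩))
    · -- y' ≪ c
      exact wayBelow_le (F 0).2.1 (hc.1 ⟨0, rfl⟩)
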